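/- There exists a universal constant c > 0 such that the following holds for all integers d, t ≥ 1 and Δ, Ξ ≥ 1. Let D ∈ ℤ^{d×t} have all entries of absolute value at most Δ, let b ∈ ℤ^d, and let the multiset b_1, …, b_ℓ be a faithful decomposition of b with respect to D of order Ξ. Set η = (c·d·(Δ+Ξ))^d. Then every x ∈ ℤ_{≥0}^t with Dx = b can be written as x = y_1 + ⋯ + y_ℓ + Σ_{g ∈ 𝒢(D) ∩ ℤ_{≥0}^t} μ_g · g, where each y_i ∈ ℤ_{≥0}^t satisfies Dy_i = b_i and ‖y_i‖_∞ ≤ η, and μ is a finitely supported family of nonnegative integers indexed by 𝒢(D) ∩ ℤ_{≥0}^t. -/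

import Mathlib

/-!
Split `x = ∑ xᵢ` along the faithful decomposition and replace each `xᵢ` by a `≤`-minimal `yᵢ ≤ xᵢ`
among the nonnegative solutions of `D yᵢ = bᵢ`; then `xᵢ - yᵢ` is a nonnegative kernel element, and
peeling off minimal nonzero nonnegative kernel elements writes it as a sum of nonnegative Graver
elements.

The bound on a minimal solution `y` with `‖D y‖∞ ≤ Ξ` is a Steinitz-type argument. Let `N = ∑ y`.
Starting from `w = y` and `s = N - d`, lower one coordinate of `w` at a time while keeping a
fractional `λ ∈ [0, w]` with `∑ λ = s`, `D λ = (s / N) D y` and `∑ w = s + d`. Then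
`D w = D (w - λ) + D λ` lies in the box of radius `dΔ + Ξ`, and minimality of `y` makes the
`N - d + 1` vectors `D w` along the chain distinct, so `N - d + 1 ≤ (2 (dΔ + Ξ) + 1)ᵈ`. A coordinate
can always be lowered: rescale `λ` to sum `s - 1` and move it to an extreme point of
`{λ ∈ [0, w] : ∑ λ = s - 1, D λ = ((s - 1) / N) D y}`, which has at most `d + 1` fractional
coordinates; as `∑ (w - λ) = d + 1`, some `w_j - λ_j ≥ 1`.
-/

/-- `FaithfulDecomp D Ξ b L` : the multiset `L` of vectors in `ℤᵈ` is a faithful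
decomposition of `b` with respect to the matrix `D` of order `Ξ`. -/
def FaithfulDecomp {d t : ℕ} (D : Matrix (Fin d) (Fin t) ℤ) (Ξ : ℤ)
    (b : Fin d → ℤ) (L : Multiset (Fin d → ℤ)) : Prop :=
  L.sum = b ∧
  (∀ b' ∈ L, ∀ j, 0 ≤ b' j * b j ∧ |b' j| ≤ |b j|) ∧
  (∀ b' ∈ L, ∀ j, |b' j| ≤ Ξ) ∧
  ∀ x : Fin t → ℤ, (∀ i, 0 ≤ x i) → D.mulVec x = b →
    ∃ Mset : Multiset ((Fin d → ℤ) × (Fin t → ℤ)),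
      Mset.map Prod.fst = L ∧ (Mset.map Prod.snd).sum = x ∧
      ∀ p ∈ Mset, (∀ i, 0 ≤ p.2 i) ∧ D.mulVec p.2 = p.1

/-- The Graver basis of `D ∈ ℤ^{d×t}`: nonzero integer kernel elements of `D`
minimal under the conformal order. -/
def Graver {d t : ℕ} (D : Matrix (Fin d) (Fin t) ℤ) : Set (Fin t → ℤ) :=
  {g | g ≠ 0 ∧ D.mulVec g = 0 ∧
    ∀ h : Fin t → ℤ, h ≠ 0 → D.mulVec h = 0 →
      (∀ i, 0 ≤ h i * g i ∧ |h i| ≤ |g i|) → h = g}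

open Finset Module Filter Topology Matrix

section FractionalCoordinates

variable {ι V : Type*} [Fintype ι] [AddCommGroup V] [Module ℝ V] [FiniteDimensional ℝ V]

theorem LinearMap.exists_ne_zero_mem_ker_of_finrank_lt_card (A : (ι → ℝ) →ₗ[ℝ] V)
    (F : Finset ι) (hF : finrank ℝ V < #F) :
    ∃ ν : ι → ℝ, ν ≠ 0 ∧ A ν = 0 ∧ ∀ j ∉ F, ν j = 0 := by
  classical
  obtain ⟨ν, hν, hν0⟩ := Submodule.exists_mem_ne_zero_of_ne_bot
    ((A ∘ₗ Function.ExtendByZero.linearMap ℝ ((↑) : F → ι)).ker_ne_bot_of_finrank_lt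
      (by simpa using hF))
  refine ⟨Function.extend ((↑) : F → ι) ν 0, ?_, hν, fun j hj => ?_⟩
  · obtain ⟨k, hk⟩ := Function.ne_iff.1 hν0
    exact Function.ne_iff.2 ⟨k, by simpa [Subtype.val_injective.extend_apply] using hk⟩
  · exact Function.extend_apply' _ _ _ fun ⟨k, hk⟩ => hj (hk ▸ k.2)

theorem eventually_add_smul_mem_Icc {μ ν w : ι → ℝ} (hμ : μ ∈ Set.Icc 0 w)
    (hν : ∀ j, ν j ≠ 0 → μ j ∈ Set.Ioo 0 (w j)) :
    ∀ᶠ ε in 𝓝 (0 : ℝ), μ + ε • ν ∈ Set.Icc 0 w := by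
  have hcoord : ∀ j, ∀ᶠ ε in 𝓝 (0 : ℝ), μ j + ε * ν j ∈ Set.Icc 0 (w j) := by
    intro j
    by_cases hj : ν j = 0
    · simpa [hj] using ⟨hμ.1 j, hμ.2 j⟩
    · have ht : Tendsto (fun ε : ℝ => μ j + ε * ν j) (𝓝 0) (𝓝 (μ j)) :=
        (by fun_prop : Continuous fun ε : ℝ => μ j + ε * ν j).tendsto' 0 _ (by simp)
      exact (ht.eventually (Ioo_mem_nhds (hν j hj).1 (hν j hj).2)).mono
        fun _ h => Set.Ioo_subset_Icc_self h
  filter_upwards [eventually_all.2 hcoord] with ε hε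
  exact ⟨fun j => (hε j).1, fun j => (hε j).2⟩

theorem exists_mem_Icc_card_fractional_le_finrank (A : (ι → ℝ) →ₗ[ℝ] V) {w l₀ : ι → ℝ}
    (hl₀ : l₀ ∈ Set.Icc 0 w) :
    ∃ l ∈ Set.Icc 0 w, A l = A l₀ ∧ #{j | l j ∈ Set.Ioo 0 (w j)} ≤ finrank ℝ V := by
  classical
  set S := Set.Icc 0 w ∩ {l | l - l₀ ∈ LinearMap.ker A}
  have hS : IsCompact S := isCompact_Icc.inter_right
    ((LinearMap.ker A).closed_of_finiteDimensional.preimage (continuous_id.sub continuous_const))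
  obtain ⟨l, hl⟩ := hS.extremePoints_nonempty ⟨l₀, hl₀, by simp⟩
  obtain ⟨⟨hlIcc, hlA⟩, hext⟩ := mem_extremePoints.1 hl
  refine ⟨l, hlIcc, LinearMap.sub_mem_ker_iff.1 hlA, not_lt.1 fun hlt => ?_⟩
  obtain ⟨ν, hν0, hAν, hνF⟩ := A.exists_ne_zero_mem_ker_of_finrank_lt_card _ hlt
  have hfrac : ∀ j, ν j ≠ 0 → l j ∈ Set.Ioo 0 (w j) := fun j hj => by
    by_contra h
    exact hj (hνF j (by simpa using h))
  -- `l` is the midpoint of `l ± ε • ν`, both of which stay in `S` for small `ε > 0`.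
  obtain ⟨ε, ⟨hplus, hminus⟩, hε⟩ := (((eventually_add_smul_mem_Icc hlIcc hfrac).and
    (eventually_add_smul_mem_Icc hlIcc (ν := -ν) (by simpa using hfrac))).filter_mono
    nhdsWithin_le_nhds |>.and self_mem_nhdsWithin).exists (f := 𝓝[>] (0 : ℝ))
  have hker : ∀ c : ℝ, l + c • ν - l₀ ∈ LinearMap.ker A := fun c => by
    rw [add_sub_right_comm]
    exact add_mem hlA (Submodule.smul_mem _ _ hAν)
  have hseg : l ∈ openSegment ℝ (l + ε • ν) (l + ε • -ν) :=
    ⟨1 / 2, 1 / 2, by norm_num, by norm_num, by norm_num, by ext j; simp; ring⟩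
  have := (hext _ ⟨hplus, hker ε⟩ _ ⟨hminus, by simpa using hker (-ε)⟩ hseg).1
  exact hν0 ((smul_eq_zero.1 (add_eq_left.1 this)).resolve_left hε.ne')

end FractionalCoordinates

theorem exists_monotoneOn_chain {α : Type*} [Preorder α] {P : ℕ → α → Prop}
    (h : ∀ s a, P (s + 1) a → ∃ b ≤ a, P s b) (S : ℕ) (a : α) (ha : P S a) :
    ∃ f : ℕ → α, MonotoneOn f (Set.Iic S) ∧ f S = a ∧ ∀ s ≤ S, P s (f s) := by
  induction S generalizing a with
  | zero => exact ⟨fun _ => a, fun _ _ _ _ _ => le_rfl, rfl, fun s hs => by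
      rwa [Nat.le_zero.1 hs]⟩
  | succ S ih =>
    obtain ⟨b, hba, hb⟩ := h S a ha
    obtain ⟨f, hmono, hfS, hf⟩ := ih b hb
    refine ⟨fun s => if s ≤ S then f s else a, ?_, by simp, fun s hs => ?_⟩
    · intro s hs s' hs' hss'
      by_cases hs'S : s' ≤ S
      · simpa [hss'.trans hs'S, hs'S] using hmono (hss'.trans hs'S) hs'S hss'
      · by_cases hsS : s ≤ S
        · simpa [hsS, hs'S] using (hmono hsS (Set.mem_Iic.2 le_rfl) hsS).trans (hfS ▸ hba)
        · simp [hsS, hs'S]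
    · by_cases hsS : s ≤ S
      · simpa [hsS] using hf s hsS
      · simpa [hsS, le_antisymm hs (not_le.1 hsS)] using ha

theorem abs_natCast_mul_inv_smul_apply_le {ι : Type*} {s N : ℕ} (hsN : s ≤ N) (v : ι → ℝ)
    (i : ι) : |(s : ℝ) * ((N : ℝ)⁻¹ • v) i| ≤ |v i| := by
  rw [Pi.smul_apply, smul_eq_mul, ← mul_assoc, abs_mul, abs_of_nonneg (by positivity)]
  refine mul_le_of_le_one_left (abs_nonneg _) ?_
  rcases N.eq_zero_or_pos with rfl | hN
  · simp
  · rw [← div_eq_mul_inv, div_le_one (by positivity)]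
    exact_mod_cast hsN

section SteinitzPath

variable {m n : Type*} [Fintype m] [Fintype n]

def IsSteinitzPoint (B : Matrix m n ℝ) (c : m → ℝ) (s : ℕ) (w : n → ℤ) : Prop :=
  ∑ j, w j = s + Fintype.card m ∧
    ∃ l ∈ Set.Icc 0 (fun j => (w j : ℝ)), ∑ j, l j = s ∧ B *ᵥ l = (s : ℝ) • c

variable {B : Matrix m n ℝ} {c : m → ℝ} {s : ℕ} {w : n → ℤ}

theorem IsSteinitzPoint.nonneg (h : IsSteinitzPoint B c s w) : 0 ≤ w := by
  obtain ⟨-, l, hl, -⟩ := h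
  exact fun j => by simpa using (hl.1 j).trans (hl.2 j)

theorem IsSteinitzPoint.abs_mulVec_le {Δ Ξ : ℝ} (h : IsSteinitzPoint B c s w)
    (hB : ∀ i j, |B i j| ≤ Δ) (hc : ∀ i, |s * c i| ≤ Ξ) (i : m) :
    |(B *ᵥ fun j => (w j : ℝ)) i| ≤ Fintype.card m * Δ + Ξ := by
  obtain ⟨hw, l, hl, hls, hBl⟩ := h
  have hslack : ∑ j, ((w j : ℝ) - l j) = Fintype.card m := by
    rw [sum_sub_distrib, hls, ← Int.cast_sum, hw]
    push_cast
    ring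
  have hsplit : (B *ᵥ fun j => (w j : ℝ)) i = (B *ᵥ fun j => (w j : ℝ) - l j) i + s * c i := by
    have := congrFun hBl i
    simp only [mulVec, dotProduct, Pi.smul_apply, smul_eq_mul, mul_sub, sum_sub_distrib] at this ⊢
    linarith
  have hgap : |(B *ᵥ fun j => (w j : ℝ) - l j) i| ≤ Δ * ∑ j, ((w j : ℝ) - l j) := by
    rw [mul_sum]
    refine (abs_sum_le_sum_abs _ _).trans (sum_le_sum fun j _ => ?_)
    rw [abs_mul, abs_of_nonneg (sub_nonneg.2 (hl.2 j))]
    exact mul_le_mul_of_nonneg_right (hB i j) (sub_nonneg.2 (hl.2 j))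
  calc |(B *ᵥ fun j => (w j : ℝ)) i|
      ≤ |(B *ᵥ fun j => (w j : ℝ) - l j) i| + |s * c i| := hsplit ▸ abs_add_le _ _
    _ ≤ Fintype.card m * Δ + Ξ := by rw [hslack, mul_comm] at hgap; exact add_le_add hgap (hc i)

theorem exists_le_sub_one_of_card_fractional_le {l : n → ℝ}
    (hl : l ∈ Set.Icc 0 (fun j => (w j : ℝ)))
    (hcard : (#{j | l j ∈ Set.Ioo 0 (w j : ℝ)} : ℝ) ≤ ∑ j, ((w j : ℝ) - l j))
    (hpos : 0 < ∑ j, ((w j : ℝ) - l j)) :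
    ∃ j, l j ≤ w j - 1 := by
  classical
  by_contra! hlt
  set F : Finset n := {j | l j ∈ Set.Ioo 0 (w j : ℝ)}
  -- Off `F`, either `l j = w j`, or `l j = 0` and then `w j = 0` because `w j < l j + 1`.
  have hoff : ∀ j ∉ F, (w j : ℝ) - l j = 0 := by
    intro j hj
    simp only [F, mem_filter, mem_univ, true_and, Set.mem_Ioo, not_and, not_lt] at hj
    rcases (hl.1 j).eq_or_lt with h0 | h0
    · have h0 : l j = 0 := by simpa using h0.symm
      have h1 : w j < 1 := by exact_mod_cast (by linarith [hlt j] : (w j : ℝ) < 1)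
      have h2 : 0 ≤ w j := by simpa using (hl.1 j).trans (hl.2 j)
      simp [h0, show w j = 0 by omega]
    · linarith [hj h0, hl.2 j]
  have hsum : ∑ j, ((w j : ℝ) - l j) = ∑ j ∈ F, ((w j : ℝ) - l j) :=
    (sum_subset (subset_univ F) fun j _ hj => hoff j hj).symm
  rcases F.eq_empty_or_nonempty with hF | hF
  · rw [hsum, hF, sum_empty] at hpos
    exact hpos.false
  · have := sum_lt_sum_of_nonempty hF fun j _ => (by linarith [hlt j] : (w j : ℝ) - l j < 1)
    rw [sum_const, nsmul_one] at this
    linarith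

theorem IsSteinitzPoint.exists_pred (h : IsSteinitzPoint B c (s + 1) w) :
    ∃ w' ≤ w, IsSteinitzPoint B c s w' := by
  classical
  obtain ⟨hw, l, hl, hls, hBl⟩ := h
  set A : (n → ℝ) →ₗ[ℝ] ℝ × (m → ℝ) := (∑ j, LinearMap.proj j).prod B.mulVecLin
  have hscale : (0 : ℝ) ≤ s / (s + 1) ∧ (s / (s + 1) : ℝ) ≤ 1 :=
    ⟨by positivity, div_le_one_of_le₀ (by linarith) (by positivity)⟩
  have hl₀ : (s / (s + 1) : ℝ) • l ∈ Set.Icc 0 (fun j => (w j : ℝ)) :=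
    ⟨fun j => by simpa using mul_nonneg hscale.1 (hl.1 j),
     fun j => by simpa using (mul_le_of_le_one_left (hl.1 j) hscale.2).trans (hl.2 j)⟩
  obtain ⟨l', hl', hAl', hcard⟩ := exists_mem_Icc_card_fractional_le_finrank A hl₀
  obtain ⟨hsum', hmul'⟩ : ∑ j, l' j = s / (s + 1) * ∑ j, l j ∧
      B *ᵥ l' = (s / (s + 1) : ℝ) • B *ᵥ l := by
    simpa [A, Prod.ext_iff, mul_sum, mulVec_smul] using hAl'
  have hl's : ∑ j, l' j = s := by
    rw [hsum', hls]; push_cast; field_simp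
  have hBl' : B *ᵥ l' = (s : ℝ) • c := by
    rw [hmul', hBl, smul_smul]; push_cast; congr 1; field_simp
  have hslack : ∑ j, ((w j : ℝ) - l' j) = Fintype.card m + 1 := by
    rw [sum_sub_distrib, hl's, ← Int.cast_sum, hw]
    push_cast
    ring
  have hrank : finrank ℝ (ℝ × (m → ℝ)) = Fintype.card m + 1 := by
    simp [Module.finrank_prod, add_comm]
  obtain ⟨j, hj⟩ := exists_le_sub_one_of_card_fractional_le hl'
    (by rw [hslack]; exact_mod_cast hrank ▸ hcard) (by rw [hslack]; positivity)
  refine ⟨w - Pi.single j 1, sub_le_self _ (Pi.single_nonneg.2 zero_le_one), ?_, l', ⟨hl'.1, ?_⟩,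
    hl's, hBl'⟩
  · simp only [Pi.sub_apply]
    rw [sum_sub_distrib, hw, sum_pi_single']
    simp
    ring
  · intro k
    by_cases hk : k = j
    · subst hk; simpa using hj
    · simpa [hk] using hl'.2 k

theorem isSteinitzPoint_of_sum_eq {y : n → ℤ} (hy : 0 ≤ y) {S : ℕ}
    (hS : ∑ j, y j = S + Fintype.card m) :
    IsSteinitzPoint B (((S + Fintype.card m : ℕ) : ℝ)⁻¹ • B *ᵥ fun j => (y j : ℝ)) S y := by
  set N : ℝ := ((S + Fintype.card m : ℕ) : ℝ)
  have hscale : (0 : ℝ) ≤ S / N ∧ (S / N : ℝ) ≤ 1 :=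
    ⟨by positivity, div_le_one_of_le₀ (by simp [N]) (by positivity)⟩
  refine ⟨hS, (S / N : ℝ) • fun j => (y j : ℝ), ⟨fun j => ?_, fun j => ?_⟩, ?_, ?_⟩
  · simpa using mul_nonneg hscale.1 (Int.cast_nonneg (hy j))
  · simpa using mul_le_of_le_one_left (Int.cast_nonneg (hy j)) hscale.2
  · simp only [Pi.smul_apply, smul_eq_mul, ← mul_sum]
    rw [← Int.cast_sum, hS, show ((S + Fintype.card m : ℤ) : ℝ) = N by simp [N]]
    exact div_mul_cancel_of_imp fun h => by
      have := Nat.cast_eq_zero.1 h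
      simp only [Nat.cast_eq_zero]
      omega
  · rw [mulVec_smul, smul_smul, div_eq_mul_inv]

end SteinitzPath

theorem exists_le_minimal_of_forall_le {α : Type*} [Preorder α] [LocallyFiniteOrder α]
    {P : α → Prop} {a x : α} (ha : ∀ z, P z → a ≤ z) (hx : P x) : ∃ y ≤ x, Minimal P y := by
  obtain ⟨y, hyx, hy⟩ :=
    ((Set.finite_Icc a x).inter_of_left {z | P z}).exists_le_minimal ⟨⟨ha x hx, le_rfl⟩, hx⟩
  exact ⟨y, hyx, hy.1.2, fun z hz hzy => hy.2 ⟨⟨ha z hz, hzy.trans hyx⟩, hz⟩ hzy⟩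

section MinimalSolutions

variable {m n : Type*} [Fintype n] {D : Matrix m n ℤ} {b : m → ℤ} {y : n → ℤ}

theorem Minimal.eq_of_le_of_mulVec_eq (hy : Minimal (fun z => 0 ≤ z ∧ D *ᵥ z = b) y)
    {u v : n → ℤ} (hu : 0 ≤ u) (huv : u ≤ v) (hvy : v ≤ y) (hD : D *ᵥ u = D *ᵥ v) : u = v := by
  have h := hy.le_of_le (y := y - (v - u))
    ⟨fun j => by simp only [Pi.sub_apply, Pi.zero_apply]; linarith [hvy j, show 0 ≤ u j from hu j],
      by rw [mulVec_sub, mulVec_sub, hD, sub_self, sub_zero, hy.prop.2]⟩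
    (sub_le_self _ (sub_nonneg.2 huv))
  exact le_antisymm huv fun j => by have := h j; simp only [Pi.sub_apply] at this; linarith

theorem Minimal.injOn_mulVec_of_monotoneOn (hy : Minimal (fun z => 0 ≤ z ∧ D *ᵥ z = b) y)
    {f : ℕ → n → ℤ} {S k : ℕ} (hmono : MonotoneOn f (Set.Iic S)) (hfS : f S = y)
    (hf0 : ∀ s ≤ S, 0 ≤ f s) (hsum : ∀ s ≤ S, ∑ j, f s j = s + k) :
    Set.InjOn (fun s => D *ᵥ f s) (Set.Iic S) := by
  intro s hs s' hs' heq
  wlog hss' : s ≤ s' generalizing s s'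
  · exact (this hs' hs heq.symm (le_of_not_ge hss')).symm
  have hfeq := hy.eq_of_le_of_mulVec_eq (hf0 s hs) (hmono hs hs' hss')
    (hfS ▸ hmono hs' (Set.mem_Iic.2 le_rfl) hs') heq
  have h := hsum s hs
  rw [hfeq, hsum s' hs'] at h
  omega

theorem sum_le_of_minimal [Fintype m] {Δ Ξ : ℕ} (hD : ∀ i j, |D i j| ≤ Δ)
    (hb : ∀ i, |b i| ≤ Ξ) (hy : Minimal (fun z => 0 ≤ z ∧ D *ᵥ z = b) y) :
    ∑ j, y j ≤ (2 * (Fintype.card m * Δ + Ξ) + 1) ^ Fintype.card m + Fintype.card m := by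
  classical
  set d := Fintype.card m
  set M : ℤ := d * Δ + Ξ
  obtain ⟨hy0, hDy⟩ := hy.prop
  rcases lt_or_ge (∑ j, y j) d with hsmall | hlarge
  · have : (0 : ℤ) ≤ (2 * M + 1) ^ d := by positivity
    linarith
  obtain ⟨S, hS⟩ : ∃ S : ℕ, ∑ j, y j = S + d := ⟨(∑ j, y j - d).toNat, by omega⟩
  set B : Matrix m n ℝ := D.map (↑)
  have hcast : ∀ (v : n → ℤ) i, (B *ᵥ fun j => (v j : ℝ)) i = (D *ᵥ v) i := fun v i => by
    simp [B, mulVec, dotProduct]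
  obtain ⟨f, hmono, hfS, hf⟩ := exists_monotoneOn_chain (fun _ _ => IsSteinitzPoint.exists_pred)
    S y (isSteinitzPoint_of_sum_eq (B := B) hy0 hS)
  have hbox : Set.MapsTo (fun s => D *ᵥ f s) (Finset.Iic S)
      (Fintype.piFinset fun _ : m => Icc (-M) M : Set (m → ℤ)) := by
    intro s hs
    rw [coe_Iic, Set.mem_Iic] at hs
    refine Fintype.mem_piFinset.2 fun i => mem_Icc.2 (abs_le.1 ?_)
    have := (hf s hs).abs_mulVec_le (Δ := Δ) (Ξ := Ξ)
      (fun i j => by simpa [B] using (by exact_mod_cast hD i j : |(D i j : ℝ)| ≤ Δ))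
      (fun i => (abs_natCast_mul_inv_smul_apply_le (by omega) _ i).trans
        (by rw [hcast, hDy]; exact_mod_cast hb i)) i
    rw [hcast] at this
    exact_mod_cast this
  have hcard := card_le_card_of_injOn _ hbox (by
    simpa using hy.injOn_mulVec_of_monotoneOn hmono hfS (fun s hs => (hf s hs).nonneg)
      (fun s hs => (hf s hs).1))
  rw [Nat.card_Iic, Fintype.card_piFinset, prod_const, Int.card_Icc, card_univ] at hcard
  have h2M : ((M + 1 - -M).toNat : ℤ) = 2 * M + 1 := by
    rw [Int.toNat_of_nonneg (by linarith [show 0 ≤ M by positivity])]; ring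
  have : (S : ℤ) + 1 ≤ (2 * M + 1) ^ d := by rw [← h2M]; exact_mod_cast hcard
  linarith

end MinimalSolutions

section Graver

variable {d t : ℕ} {D : Matrix (Fin d) (Fin t) ℤ}

theorem mem_graver_of_minimal {g : Fin t → ℤ}
    (hg : Minimal (fun z => 0 ≤ z ∧ z ≠ 0 ∧ D *ᵥ z = 0) g) : g ∈ Graver D := by
  obtain ⟨hg0, hgne, hDg⟩ := hg.prop
  refine ⟨hgne, hDg, fun h hne hDh hconf => ?_⟩
  have hh0 : 0 ≤ h := fun i => by
    obtain ⟨hmul, habs⟩ := hconf i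
    rcases (hg0 i).eq_or_lt with h0 | h0
    · rw [← h0, Pi.zero_apply, abs_zero, abs_nonpos_iff] at habs
      simp [habs]
    · exact nonneg_of_mul_nonneg_left hmul h0
  have hhg : h ≤ g := fun i => by
    simpa [abs_of_nonneg (hh0 i), abs_of_nonneg (hg0 i)] using (hconf i).2
  exact le_antisymm hhg (hg.le_of_le ⟨hh0, hne, hDh⟩ hhg)

theorem exists_graver_decomposition {z : Fin t → ℤ} (hz : 0 ≤ z) (hDz : D *ᵥ z = 0) :
    ∃ μ : Multiset (Fin t → ℤ), (∀ g ∈ μ, g ∈ Graver D ∧ 0 ≤ g) ∧ μ.sum = z := by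
  classical
  induction hN : (∑ j, z j).toNat using Nat.strong_induction_on generalizing z with
  | _ N ih =>
  by_cases hz0 : z = 0
  · exact ⟨0, by simp, by simp [hz0]⟩
  obtain ⟨g, hgz, hg⟩ := exists_le_minimal_of_forall_le
    (P := fun z => 0 ≤ z ∧ z ≠ 0 ∧ D *ᵥ z = 0) (fun _ h => h.1) ⟨hz, hz0, hDz⟩
  have hg_pos : 0 < ∑ j, g j := Fintype.sum_pos (lt_of_le_of_ne hg.prop.1 hg.prop.2.1.symm)
  have hlt : (∑ j, (z - g) j).toNat < N := by
    have := sum_nonneg fun j (_ : j ∈ univ) => sub_nonneg.2 (hgz j)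
    simp only [Pi.sub_apply, sum_sub_distrib] at this ⊢
    omega
  obtain ⟨μ, hμ, hμz⟩ := ih _ hlt (sub_nonneg.2 hgz)
    (by rw [mulVec_sub, hDz, hg.prop.2.2, sub_zero]) rfl
  refine ⟨g ::ₘ μ, fun g' hg' => ?_, by rw [Multiset.sum_cons, hμz, add_sub_cancel]⟩
  rcases Multiset.mem_cons.1 hg' with rfl | hg'
  · exact ⟨mem_graver_of_minimal hg, hg.prop.1⟩
  · exact hμ g' hg'

theorem exists_eq_small_add_graver_sum {Δ Ξ : ℕ} (hD : ∀ i j, |D i j| ≤ Δ) {x : Fin t → ℤ}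
    (hx : 0 ≤ x) (hDx : ∀ i, |(D *ᵥ x) i| ≤ Ξ) :
    ∃ y, 0 ≤ y ∧ D *ᵥ y = D *ᵥ x ∧ (∀ j, y j ≤ (2 * (d * Δ + Ξ) + 1) ^ d + d) ∧
      ∃ μ : Multiset (Fin t → ℤ), (∀ g ∈ μ, g ∈ Graver D ∧ 0 ≤ g) ∧ x = y + μ.sum := by
  obtain ⟨y, hyx, hy⟩ := exists_le_minimal_of_forall_le
    (P := fun z => 0 ≤ z ∧ D *ᵥ z = D *ᵥ x) (fun _ h => h.1) ⟨hx, rfl⟩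
  obtain ⟨μ, hμ, hμsum⟩ := exists_graver_decomposition (D := D) (sub_nonneg.2 hyx)
    (by rw [mulVec_sub, hy.prop.2, sub_self])
  refine ⟨y, hy.prop.1, hy.prop.2, fun j => ?_, μ, hμ, by rw [hμsum, add_sub_cancel]⟩
  have := sum_le_of_minimal hD hDx hy
  simp only [Fintype.card_fin] at this
  exact (single_le_sum (fun j _ => hy.prop.1 j) (mem_univ j)).trans this

end Graver

theorem two_mul_add_one_pow_add_le {d Δ Ξ : ℕ} (hd : 1 ≤ d) (hΔ : 1 ≤ Δ) :
    (2 * (d * Δ + Ξ) + 1) ^ d + d ≤ (6 * d * (Δ + Ξ)) ^ d := by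
  have hdΔ : 1 ≤ d * Δ := Nat.one_le_iff_ne_zero.2 (by positivity)
  have hdΞ : Ξ ≤ d * Ξ := Nat.le_mul_of_pos_left Ξ hd
  calc (2 * (d * Δ + Ξ) + 1) ^ d + d ≤ 2 * (2 * (d * Δ + Ξ) + 1) ^ d := by
        have : d ≤ (2 * (d * Δ + Ξ) + 1) ^ d :=
          Nat.lt_two_pow_self.le.trans (Nat.pow_le_pow_left (by omega) d)
        omega
    _ ≤ (2 * (2 * (d * Δ + Ξ) + 1)) ^ d := by
        rw [mul_pow]
        gcongr
        exact Nat.le_self_pow (by omega) 2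
    _ ≤ (6 * d * (Δ + Ξ)) ^ d := Nat.pow_le_pow_left (by nlinarith) d

/-- There is a universal constant `c > 0` such that for all `d, t ≥ 1` and
`Δ, Ξ ≥ 1`: if `D ∈ ℤ^{d×t}` has entries bounded by `Δ` and the multiset `L` is a
faithful decomposition of `b` with respect to `D` of order `Ξ`, then with
`η = (c·d·(Δ+Ξ))^d` every nonnegative integral solution `x` of `D x = b` can be
written as `x = y₁ + ⋯ + y_ℓ + Σ_{g} μ_g · g`, where the `yᵢ` are nonnegative
integral solutions of `D yᵢ = bᵢ` (pairing off the members `bᵢ` of `L`) with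
`‖yᵢ‖_∞ ≤ η`, and `μ` is a finite multiset of nonnegative Graver basis elements
of `D`. -/
theorem faithful_decomposition_with_small_base_solutions :
    ∃ c : ℕ, 0 < c ∧ ∀ d t Δ Ξ : ℕ, 1 ≤ d → 1 ≤ t → 1 ≤ Δ → 1 ≤ Ξ →
      ∀ D : Matrix (Fin d) (Fin t) ℤ, (∀ i j, |D i j| ≤ (Δ : ℤ)) →
      ∀ b : Fin d → ℤ, ∀ L : Multiset (Fin d → ℤ),
        FaithfulDecomp D (Ξ : ℤ) b L →
        ∀ x : Fin t → ℤ, (∀ i, 0 ≤ x i) → D.mulVec x = b →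
          ∃ Mset : Multiset ((Fin d → ℤ) × (Fin t → ℤ)),
            Mset.map Prod.fst = L ∧
            (∀ p ∈ Mset, (∀ i, 0 ≤ p.2 i) ∧ D.mulVec p.2 = p.1 ∧
              ∀ i, |p.2 i| ≤ ((c * d * (Δ + Ξ) : ℕ) : ℤ) ^ d) ∧
            ∃ μ : Multiset (Fin t → ℤ),
              (∀ g ∈ μ, g ∈ Graver D ∧ ∀ i, 0 ≤ g i) ∧
              x = (Mset.map Prod.snd).sum + μ.sum := by
  refine ⟨6, by norm_num, fun d t Δ Ξ hd _ hΔ _ D hD b L ⟨_, _, hLΞ, hfaithful⟩ x hx hDx => ?_⟩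
  obtain ⟨P, hfst, hsnd, hP⟩ := hfaithful x hx hDx
  have hpiece : ∀ p ∈ P, ∃ y, 0 ≤ y ∧ D *ᵥ y = D *ᵥ p.2 ∧
      (∀ j, y j ≤ (2 * (d * Δ + Ξ) + 1) ^ d + d) ∧
      ∃ μ : Multiset (Fin t → ℤ), (∀ g ∈ μ, g ∈ Graver D ∧ 0 ≤ g) ∧ p.2 = y + μ.sum :=
    fun p hp => exists_eq_small_add_graver_sum hD (hP p hp).1
      fun i => (hP p hp).2 ▸ hLΞ p.1 (hfst ▸ Multiset.mem_map_of_mem _ hp) i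
  choose! y hy0 hDy hybound μ hμ hsum using hpiece
  have hbound := two_mul_add_one_pow_add_le (Ξ := Ξ) hd hΔ
  refine ⟨P.map fun p => (p.1, y p), by simpa [Multiset.map_map] using hfst, ?_,
    (P.map μ).join, ?_, ?_⟩
  · simp only [Multiset.mem_map]
    rintro _ ⟨p, hp, rfl⟩
    refine ⟨hy0 p hp, (hDy p hp).trans (hP p hp).2, fun i => ?_⟩
    rw [abs_of_nonneg (hy0 p hp i)]
    exact (hybound p hp i).trans (by exact_mod_cast hbound)
  · simp only [Multiset.mem_join, Multiset.mem_map]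
    rintro g ⟨_, ⟨p, hp, rfl⟩, hg⟩
    exact hμ p hp g hg
  · rw [← hsnd, Multiset.sum_join, Multiset.map_map, Multiset.map_map, ← Multiset.sum_map_add]
    exact congrArg _ (Multiset.map_congr rfl hsum)
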